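/- Let M ∈ [0, 2), β₀, β₁, β₂ ∈ ℝ with β₁ < 0 and β₂ > 20β₁, and set m₁ = √(2+M), m₂ = √(2−M). Then the vector ξ_g = (m₁⁴/16, m₁³m₂/8, √6·m₁²m₂²/16, m₁m₂³/8, m₂⁴/16) belongs to S_C(M), satisfies τ(ξ_g) = √(4 − M²) and δ(ξ_g) = 0, and minimizes E_U over S_C(M): E_U(ξ_g) ≤ E_U(ξ) for all ξ ∈ S_C(M), with minimum value E_U(ξ_g) = (β₀ + 4β₁)/2. -/

import Mathlib

/-! The key estimate is the pointwise bound `F_z² + |τ|² + 4|δ|² ≤ 4 ‖ξ‖⁴`. It comes from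
decomposing the pair state `ξ ⊗ ξ` into total-spin channels: `8 ‖ξ‖⁴` equals
`2 F_z² + 2 |τ|² + 4 |δ|²` plus the squared norm of the spin-2 pair amplitudes, and the
spin-2 singlet `4 δ²` built from those amplitudes is bounded by their squared norm.
On `S_C(M)` this gives `|τ|² ≤ 4 - M² - 4 |δ|²`, so for `β₁ < 0` and `β₂ ≥ 20 β₁`
the energy is at least `(β₀ + 4 β₁) / 2`. The coherent state `ξ_g` attains
`|τ|² = 4 - M²` and `δ = 0`. -/

noncomputable section

/-- τ for complex 5-vectors (ξ₂, ξ₁, ξ₀, ξ₋₁, ξ₋₂). -/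
def tauC (z2 z1 z0 zm1 zm2 : ℂ) : ℂ :=
  2 * ((starRingEnd ℂ) z2 * z1 + (starRingEnd ℂ) zm1 * zm2)
    + (Real.sqrt 6 : ℂ) * ((starRingEnd ℂ) z1 * z0 + (starRingEnd ℂ) z0 * zm1)

/-- δ for complex 5-vectors. -/
def deltaC (z2 z1 z0 zm1 zm2 : ℂ) : ℂ :=
  2 * z2 * zm2 - 2 * z1 * zm1 + z0 ^ 2

/-- F_z for complex 5-vectors. -/
def FzC (z2 z1 z0 zm1 zm2 : ℂ) : ℝ :=
  2 * (‖z2‖ ^ 2 - ‖zm2‖ ^ 2)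
    + ‖z1‖ ^ 2 - ‖zm1‖ ^ 2

/-- Membership in S_C(M): mass and magnetization constraints. -/
def memSC (M : ℝ) (z2 z1 z0 zm1 zm2 : ℂ) : Prop :=
  ‖z2‖ ^ 2 + ‖z1‖ ^ 2 + ‖z0‖ ^ 2
      + ‖zm1‖ ^ 2 + ‖zm2‖ ^ 2 = 1 ∧
  2 * ‖z2‖ ^ 2 + ‖z1‖ ^ 2
      - ‖zm1‖ ^ 2 - 2 * ‖zm2‖ ^ 2 = M

/-- The uniform energy E_U. -/
def EU (b0 b1 b2 M : ℝ) (z2 z1 z0 zm1 zm2 : ℂ) : ℝ :=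
  (1 / 2) * (b1 * ‖tauC z2 z1 z0 zm1 zm2‖ ^ 2
    + (b2 / 5) * ‖deltaC z2 z1 z0 zm1 zm2‖ ^ 2
    + b0 + b1 * M ^ 2)

-- Amplitudes of the total-spin-2 part of `ξ ⊗ ξ`, scaled to integer coefficients.
def pairAmp2 (z2 z1 z0 : ℂ) : ℂ := 4 * z2 * z0 - (Real.sqrt 6 : ℂ) * z1 ^ 2
def pairAmp1 (z2 z1 z0 zm1 : ℂ) : ℂ := 2 * (Real.sqrt 6 : ℂ) * z2 * zm1 - 2 * z1 * z0
def pairAmp0 (z2 z1 z0 zm1 zm2 : ℂ) : ℂ := 4 * z2 * zm2 + 2 * z1 * zm1 - 2 * z0 ^ 2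
def pairAmpNeg1 (z1 z0 zm1 zm2 : ℂ) : ℂ := 2 * (Real.sqrt 6 : ℂ) * z1 * zm2 - 2 * z0 * zm1
def pairAmpNeg2 (z0 zm1 zm2 : ℂ) : ℂ := 4 * z0 * zm2 - (Real.sqrt 6 : ℂ) * zm1 ^ 2

lemma ofReal_sqrt_six_sq : ((Real.sqrt 6 : ℝ) : ℂ) ^ 2 = 6 := by
  rw [← Complex.ofReal_pow, Real.sq_sqrt (by norm_num : (0 : ℝ) ≤ 6)]
  norm_num

section Estimate

variable (z2 z1 z0 zm1 zm2 : ℂ)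

lemma eight_mul_sq_normSq_eq_spin_decomposition :
    2 * FzC z2 z1 z0 zm1 zm2 ^ 2 + 2 * ‖tauC z2 z1 z0 zm1 zm2‖ ^ 2
      + 4 * ‖deltaC z2 z1 z0 zm1 zm2‖ ^ 2
      + (‖pairAmp2 z2 z1 z0‖ ^ 2 + ‖pairAmp1 z2 z1 z0 zm1‖ ^ 2
        + ‖pairAmp0 z2 z1 z0 zm1 zm2‖ ^ 2 + ‖pairAmpNeg1 z1 z0 zm1 zm2‖ ^ 2
        + ‖pairAmpNeg2 z0 zm1 zm2‖ ^ 2)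
    = 8 * (‖z2‖ ^ 2 + ‖z1‖ ^ 2 + ‖z0‖ ^ 2 + ‖zm1‖ ^ 2 + ‖zm2‖ ^ 2) ^ 2 := by
  simp only [FzC, tauC, deltaC, pairAmp2, pairAmp1, pairAmp0, pairAmpNeg1, pairAmpNeg2,
    Complex.sq_norm]
  rw [← Complex.ofReal_inj]
  push_cast [← Complex.mul_conj]
  simp only [map_add, map_sub, map_mul, map_pow, map_ofNat, Complex.conj_ofReal,
    Complex.conj_conj]
  set c := starRingEnd ℂ
  linear_combination (2 * c z0 * c z1 * z0 * z1 + 2 * c z0 * c zm1 * z0 * zm1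
    + 2 * c z0 ^ 2 * z1 * zm1 + 2 * c z1 * c zm1 * z0 ^ 2 + 4 * c z1 * c zm2 * z1 * zm2
    + c z1 ^ 2 * z1 ^ 2 + 4 * c z2 * c zm1 * z2 * zm1 + c zm1 ^ 2 * zm1 ^ 2)
      * ofReal_sqrt_six_sq

lemma four_mul_deltaC_sq_eq_pairAmp_singlet :
    4 * deltaC z2 z1 z0 zm1 zm2 ^ 2
      = 2 * pairAmp2 z2 z1 z0 * pairAmpNeg2 z0 zm1 zm2
        - 2 * pairAmp1 z2 z1 z0 zm1 * pairAmpNeg1 z1 z0 zm1 zm2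
        + pairAmp0 z2 z1 z0 zm1 zm2 ^ 2 := by
  simp only [pairAmp2, pairAmp1, pairAmp0, pairAmpNeg1, pairAmpNeg2, deltaC]
  linear_combination (8 * z1 * z2 * zm1 * zm2 - 2 * z1 ^ 2 * zm1 ^ 2) * ofReal_sqrt_six_sq

end Estimate

lemma norm_spin2_singlet_le {𝕜 : Type*} [RCLike 𝕜] (a b c d e : 𝕜) :
    ‖2 * a * e - 2 * b * d + c ^ 2‖ ≤ ‖a‖ ^ 2 + ‖b‖ ^ 2 + ‖c‖ ^ 2 + ‖d‖ ^ 2 + ‖e‖ ^ 2 := by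
  have hae : ‖2 * a * e‖ = 2 * ‖a‖ * ‖e‖ := by rw [norm_mul, norm_mul, RCLike.norm_ofNat]
  have hbd : ‖2 * b * d‖ = 2 * ‖b‖ * ‖d‖ := by rw [norm_mul, norm_mul, RCLike.norm_ofNat]
  calc ‖2 * a * e - 2 * b * d + c ^ 2‖
      ≤ ‖2 * a * e‖ + ‖2 * b * d‖ + ‖c ^ 2‖ :=
        (norm_add_le _ _).trans (add_le_add_left (norm_sub_le _ _) _)
    _ ≤ _ := by
        rw [hae, hbd, norm_pow]
        nlinarith [sq_nonneg (‖a‖ - ‖e‖), sq_nonneg (‖b‖ - ‖d‖)]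

lemma FzC_sq_add_norm_tauC_sq_add_four_mul_norm_deltaC_sq_le (z2 z1 z0 zm1 zm2 : ℂ) :
    FzC z2 z1 z0 zm1 zm2 ^ 2 + ‖tauC z2 z1 z0 zm1 zm2‖ ^ 2
      + 4 * ‖deltaC z2 z1 z0 zm1 zm2‖ ^ 2
    ≤ 4 * (‖z2‖ ^ 2 + ‖z1‖ ^ 2 + ‖z0‖ ^ 2 + ‖zm1‖ ^ 2 + ‖zm2‖ ^ 2) ^ 2 := by
  have hsinglet : 4 * ‖deltaC z2 z1 z0 zm1 zm2‖ ^ 2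
      ≤ ‖pairAmp2 z2 z1 z0‖ ^ 2 + ‖pairAmp1 z2 z1 z0 zm1‖ ^ 2
        + ‖pairAmp0 z2 z1 z0 zm1 zm2‖ ^ 2 + ‖pairAmpNeg1 z1 z0 zm1 zm2‖ ^ 2
        + ‖pairAmpNeg2 z0 zm1 zm2‖ ^ 2 := by
    have h := norm_spin2_singlet_le (pairAmp2 z2 z1 z0) (pairAmp1 z2 z1 z0 zm1)
      (pairAmp0 z2 z1 z0 zm1 zm2) (pairAmpNeg1 z1 z0 zm1 zm2) (pairAmpNeg2 z0 zm1 zm2)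
    rwa [← four_mul_deltaC_sq_eq_pairAmp_singlet, norm_mul, norm_pow,
      RCLike.norm_ofNat] at h
  linarith [eight_mul_sq_normSq_eq_spin_decomposition z2 z1 z0 zm1 zm2]

lemma half_add_four_mul_le_EU {M b0 b1 b2 : ℝ} (hb1 : b1 ≤ 0) (hb2 : 20 * b1 ≤ b2)
    {z2 z1 z0 zm1 zm2 : ℂ} (hz : memSC M z2 z1 z0 zm1 zm2) :
    (b0 + 4 * b1) / 2 ≤ EU b0 b1 b2 M z2 z1 z0 zm1 zm2 := by
  obtain ⟨hmass, hmag⟩ := hz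
  have hF : FzC z2 z1 z0 zm1 zm2 = M := by simp only [FzC]; linarith
  have hkey := FzC_sq_add_norm_tauC_sq_add_four_mul_norm_deltaC_sq_le z2 z1 z0 zm1 zm2
  rw [hmass, hF] at hkey
  have hτ : 0 ≤ -b1 * (4 - M ^ 2 - ‖tauC z2 z1 z0 zm1 zm2‖ ^ 2
      - 4 * ‖deltaC z2 z1 z0 zm1 zm2‖ ^ 2) := mul_nonneg (by linarith) (by linarith)
  have hδ : 0 ≤ (b2 / 5 - 4 * b1) * ‖deltaC z2 z1 z0 zm1 zm2‖ ^ 2 :=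
    mul_nonneg (by linarith) (sq_nonneg _)
  rw [EU]
  linarith

lemma EU_eq_of_norm_tauC_sq_of_deltaC_eq_zero {M b0 b1 b2 : ℝ} {z2 z1 z0 zm1 zm2 : ℂ}
    (hτ : ‖tauC z2 z1 z0 zm1 zm2‖ ^ 2 = 4 - M ^ 2) (hδ : deltaC z2 z1 z0 zm1 zm2 = 0) :
    EU b0 b1 b2 M z2 z1 z0 zm1 zm2 = (b0 + 4 * b1) / 2 := by
  rw [EU, hτ, hδ, norm_zero]
  ring

section CoherentState

variable (m1 m2 : ℝ)

lemma memSC_coherent {M : ℝ} (hm1 : m1 ^ 2 = 2 + M) (hm2 : m2 ^ 2 = 2 - M) :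
    memSC M ((m1 ^ 4 / 16 : ℝ) : ℂ) ((m1 ^ 3 * m2 / 8 : ℝ) : ℂ)
      ((Real.sqrt 6 * m1 ^ 2 * m2 ^ 2 / 16 : ℝ) : ℂ)
      ((m1 * m2 ^ 3 / 8 : ℝ) : ℂ) ((m2 ^ 4 / 16 : ℝ) : ℂ) := by
  have hs6 : Real.sqrt 6 ^ 2 = 6 := Real.sq_sqrt (by norm_num)
  have hsum : m1 ^ 2 + m2 ^ 2 = 4 := by linarith
  set S := m1 ^ 2 + m2 ^ 2
  simp only [memSC, Complex.norm_real, Real.norm_eq_abs, sq_abs]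
  -- mass `= S⁴ / 256` and magnetization `= S³ (m1² - m2²) / 128`, where `S = 4`
  constructor
  · linear_combination (S ^ 3 + 4 * S ^ 2 + 16 * S + 64) / 256 * hsum
      + m1 ^ 4 * m2 ^ 4 / 256 * hs6
  · linear_combination (S ^ 2 + 4 * S + 16) * (m1 ^ 2 - m2 ^ 2) / 128 * hsum
      + hm1 / 2 - hm2 / 2

lemma tauC_coherent (h : m1 ^ 2 + m2 ^ 2 = 4) :
    tauC ((m1 ^ 4 / 16 : ℝ) : ℂ) ((m1 ^ 3 * m2 / 8 : ℝ) : ℂ)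
      ((Real.sqrt 6 * m1 ^ 2 * m2 ^ 2 / 16 : ℝ) : ℂ)
      ((m1 * m2 ^ 3 / 8 : ℝ) : ℂ) ((m2 ^ 4 / 16 : ℝ) : ℂ) = ((m1 * m2 : ℝ) : ℂ) := by
  have hs6 : Real.sqrt 6 ^ 2 = 6 := Real.sq_sqrt (by norm_num)
  set S := m1 ^ 2 + m2 ^ 2
  simp only [tauC, Complex.conj_ofReal]
  norm_cast
  -- `τ = m1 m2 S³ / 64`
  linear_combination m1 * m2 * (S ^ 2 + 4 * S + 16) / 64 * h
    + m1 ^ 3 * m2 ^ 3 * S / 128 * hs6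

lemma deltaC_coherent :
    deltaC ((m1 ^ 4 / 16 : ℝ) : ℂ) ((m1 ^ 3 * m2 / 8 : ℝ) : ℂ)
      ((Real.sqrt 6 * m1 ^ 2 * m2 ^ 2 / 16 : ℝ) : ℂ)
      ((m1 * m2 ^ 3 / 8 : ℝ) : ℂ) ((m2 ^ 4 / 16 : ℝ) : ℂ) = 0 := by
  simp only [deltaC]
  norm_cast
  linear_combination m1 ^ 4 * m2 ^ 4 / 256 * (Real.sq_sqrt (by norm_num : (0 : ℝ) ≤ 6))

end CoherentState

theorem stmt8 (M b0 b1 b2 : ℝ) (hM0 : 0 ≤ M) (hM2 : M < 2)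
    (hb1 : b1 < 0) (hb2 : b2 > 20 * b1)
    (m1 m2 : ℝ) (hm1 : m1 = Real.sqrt (2 + M)) (hm2 : m2 = Real.sqrt (2 - M)) :
    memSC M ((m1 ^ 4 / 16 : ℝ) : ℂ) ((m1 ^ 3 * m2 / 8 : ℝ) : ℂ)
        ((Real.sqrt 6 * m1 ^ 2 * m2 ^ 2 / 16 : ℝ) : ℂ)
        ((m1 * m2 ^ 3 / 8 : ℝ) : ℂ) ((m2 ^ 4 / 16 : ℝ) : ℂ) ∧
    tauC ((m1 ^ 4 / 16 : ℝ) : ℂ) ((m1 ^ 3 * m2 / 8 : ℝ) : ℂ)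
        ((Real.sqrt 6 * m1 ^ 2 * m2 ^ 2 / 16 : ℝ) : ℂ)
        ((m1 * m2 ^ 3 / 8 : ℝ) : ℂ) ((m2 ^ 4 / 16 : ℝ) : ℂ)
      = (Real.sqrt (4 - M ^ 2) : ℂ) ∧
    deltaC ((m1 ^ 4 / 16 : ℝ) : ℂ) ((m1 ^ 3 * m2 / 8 : ℝ) : ℂ)
        ((Real.sqrt 6 * m1 ^ 2 * m2 ^ 2 / 16 : ℝ) : ℂ)
        ((m1 * m2 ^ 3 / 8 : ℝ) : ℂ) ((m2 ^ 4 / 16 : ℝ) : ℂ) = 0 ∧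
    (∀ z2 z1 z0 zm1 zm2 : ℂ, memSC M z2 z1 z0 zm1 zm2 →
      EU b0 b1 b2 M ((m1 ^ 4 / 16 : ℝ) : ℂ) ((m1 ^ 3 * m2 / 8 : ℝ) : ℂ)
          ((Real.sqrt 6 * m1 ^ 2 * m2 ^ 2 / 16 : ℝ) : ℂ)
          ((m1 * m2 ^ 3 / 8 : ℝ) : ℂ) ((m2 ^ 4 / 16 : ℝ) : ℂ)
        ≤ EU b0 b1 b2 M z2 z1 z0 zm1 zm2) ∧
    EU b0 b1 b2 M ((m1 ^ 4 / 16 : ℝ) : ℂ) ((m1 ^ 3 * m2 / 8 : ℝ) : ℂ)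
        ((Real.sqrt 6 * m1 ^ 2 * m2 ^ 2 / 16 : ℝ) : ℂ)
        ((m1 * m2 ^ 3 / 8 : ℝ) : ℂ) ((m2 ^ 4 / 16 : ℝ) : ℂ)
      = (b0 + 4 * b1) / 2 := by
  have hm1_sq : m1 ^ 2 = 2 + M := hm1 ▸ Real.sq_sqrt (by linarith)
  have hm2_sq : m2 ^ 2 = 2 - M := hm2 ▸ Real.sq_sqrt (by linarith)
  have hsqrt : Real.sqrt (4 - M ^ 2) = m1 * m2 := by
    rw [hm1, hm2, ← Real.sqrt_mul (by linarith)]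
    ring_nf
  have hτ := tauC_coherent m1 m2 (by linarith)
  rw [← hsqrt] at hτ
  have hτ_sq : ‖tauC ((m1 ^ 4 / 16 : ℝ) : ℂ) ((m1 ^ 3 * m2 / 8 : ℝ) : ℂ)
      ((Real.sqrt 6 * m1 ^ 2 * m2 ^ 2 / 16 : ℝ) : ℂ)
      ((m1 * m2 ^ 3 / 8 : ℝ) : ℂ) ((m2 ^ 4 / 16 : ℝ) : ℂ)‖ ^ 2 = 4 - M ^ 2 := by
    rw [hτ, Complex.norm_real, Real.norm_eq_abs, sq_abs, Real.sq_sqrt (by nlinarith)]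
  have hval := EU_eq_of_norm_tauC_sq_of_deltaC_eq_zero (b0 := b0) (b1 := b1) (b2 := b2)
    hτ_sq (deltaC_coherent m1 m2)
  refine ⟨memSC_coherent m1 m2 hm1_sq hm2_sq, hτ, deltaC_coherent m1 m2, ?_, hval⟩
  intro z2 z1 z0 zm1 zm2 hz
  exact hval ▸ half_add_four_mul_le_EU hb1.le hb2.le hz
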